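/- Let δ = (3,2,1)/(1,1) and let k be the integer tableau of shape δ with entries k_{1,2} = 1, k_{1,3} = 3, k_{2,2} = 2, k_{3,1} = 5. Let δ† = (3,3,3,3,2,1)/(2,2,2,2) and let k† be the tableau of shape δ† with entries k†_{1,3} = 1, k†_{2,3} = 1, k†_{3,3} = 1, k†_{4,3} = 2, k†_{5,1} = 1, k†_{5,2} = 3, k†_{6,1} = 2. Then ζ_δ(k) = ζ_{δ†}(k†). -/

import Mathlib

noncomputable section

/-- The box `(i,j)` (0-indexed row `i`, column `j`) belongs to the skew diagram `λ/μ`. -/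
def SkewCell (lam mu : ℕ → ℕ) (p : ℕ × ℕ) : Prop :=
  mu p.1 ≤ p.2 ∧ p.2 < lam p.1

/-- The finite set of boxes of the skew diagram `λ/μ` (where `lam i = 0` for `i ≥ r`). -/
def skewCells (lam mu : ℕ → ℕ) (r : ℕ) : Finset (ℕ × ℕ) :=
  (Finset.range r ×ˢ Finset.range (lam 0)).filter fun p => mu p.1 ≤ p.2 ∧ p.2 < lam p.1

/-- Semi-standard Young tableau of skew shape `λ/μ`: positive entries on boxes (and `0`
off the diagram), rows weakly increasing, columns strictly increasing. -/
def IsSSYT (lam mu : ℕ → ℕ) (M : ℕ × ℕ → ℕ) : Prop :=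
  (∀ p, SkewCell lam mu p → 0 < M p) ∧
  (∀ p, ¬ SkewCell lam mu p → M p = 0) ∧
  (∀ i j, SkewCell lam mu (i, j) → SkewCell lam mu (i, j + 1) → M (i, j) ≤ M (i, j + 1)) ∧
  (∀ i j, SkewCell lam mu (i, j) → SkewCell lam mu (i + 1, j) → M (i, j) < M (i + 1, j))

/-- A corner of the skew diagram `λ/μ`. -/
def SkewCorner (lam mu : ℕ → ℕ) (p : ℕ × ℕ) : Prop :=
  SkewCell lam mu p ∧ ¬ SkewCell lam mu (p.1 + 1, p.2) ∧ ¬ SkewCell lam mu (p.1, p.2 + 1)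

/-- The (skew) Schur multiple zeta function. -/
def schurZeta (lam mu : ℕ → ℕ) (r : ℕ) (s : ℕ × ℕ → ℂ) : ℂ :=
  ∑' M : {M : ℕ × ℕ → ℕ // IsSSYT lam mu M},
    ∏ p ∈ skewCells lam mu r, ((M.1 p : ℂ) ^ (-(s p)))

/-- The partition `λ = (3,2,1)` (0-indexed). -/
def lam312 : ℕ → ℕ := fun i => if i = 0 then 3 else if i = 1 then 2 else if i = 2 then 1 else 0

/-- The partition `μ = (1,1)` (0-indexed). -/
def mu11 : ℕ → ℕ := fun i => if i < 2 then 1 else 0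

/-- The tableau `k` of shape `(3,2,1)/(1,1)` with (1-indexed) entries
`k_{1,2} = 1, k_{1,3} = 3, k_{2,2} = 2, k_{3,1} = 5` (here 0-indexed). -/
def kTab12 : ℕ × ℕ → ℂ := fun p =>
  if p = (0, 1) then 1 else if p = (0, 2) then 3 else
  if p = (1, 1) then 2 else if p = (2, 0) then 5 else 0

/-- The partition `λ† = (3,3,3,3,2,1)` (0-indexed). -/
def lamD12 : ℕ → ℕ := fun i => if i < 4 then 3 else if i = 4 then 2 else if i = 5 then 1 else 0

/-- The partition `μ† = (2,2,2,2)` (0-indexed). -/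
def muD12 : ℕ → ℕ := fun i => if i < 4 then 2 else 0

/-- The tableau `k†` of shape `(3,3,3,3,2,1)/(2,2,2,2)` with (1-indexed) entries
`k†_{1,3} = 1, k†_{2,3} = 1, k†_{3,3} = 1, k†_{4,3} = 2, k†_{5,1} = 1, k†_{5,2} = 3,
k†_{6,1} = 2` (here 0-indexed). -/
def kTabD12 : ℕ × ℕ → ℂ := fun p =>
  if p = (0, 2) then 1 else if p = (1, 2) then 1 else if p = (2, 2) then 1 else
  if p = (3, 2) then 2 else if p = (4, 0) then 1 else if p = (4, 1) then 3 else
  if p = (5, 0) then 2 else 0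

open scoped NNReal ENNReal Classical

lemma cellChar1 (p : ℕ × ℕ) : SkewCell lam312 mu11 p ↔
    p = (0,1) ∨ p = (0,2) ∨ p = (1,1) ∨ p = (2,0) := by
  obtain ⟨i, j⟩ := p
  simp only [SkewCell, lam312, mu11, Prod.mk.injEq]
  split_ifs <;> omega

lemma cellChar2 (p : ℕ × ℕ) : SkewCell lamD12 muD12 p ↔
    p = (0,2) ∨ p = (1,2) ∨ p = (2,2) ∨ p = (3,2) ∨ p = (4,0) ∨ p = (4,1) ∨ p = (5,0) := by
  obtain ⟨i, j⟩ := p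
  simp only [SkewCell, lamD12, muD12, Prod.mk.injEq]
  split_ifs <;> omega

/-- tuple order: (a, c, b, d) = (M(0,1), M(0,2), M(1,1), M(2,0)) -/
def Q1 (q : ℕ × ℕ × ℕ × ℕ) : Prop :=
  0 < q.1 ∧ q.1 ≤ q.2.1 ∧ q.1 < q.2.2.1 ∧ 0 < q.2.2.2

def tab1 (q : ℕ × ℕ × ℕ × ℕ) : ℕ × ℕ → ℕ := fun p =>
  if p = (0,1) then q.1 else if p = (0,2) then q.2.1 else
  if p = (1,1) then q.2.2.1 else if p = (2,0) then q.2.2.2 else 0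

lemma isSSYT_tab1 {q : ℕ × ℕ × ℕ × ℕ} (hq : Q1 q) : IsSSYT lam312 mu11 (tab1 q) := by
  obtain ⟨a, c, b, d⟩ := q
  dsimp only [Q1] at hq
  obtain ⟨h1, h2, h3, h4⟩ := hq
  refine ⟨?_, ?_, ?_, ?_⟩
  · intro p hp
    rcases (cellChar1 p).1 hp with h|h|h|h <;> subst h <;> norm_num [tab1, Prod.ext_iff] <;> omega
  · intro p hp
    rw [cellChar1] at hp
    push_neg at hp
    obtain ⟨pi, pj⟩ := p
    simp only [ne_eq, Prod.mk.injEq, not_and] at hp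
    simp only [tab1, Prod.mk.injEq]
    split_ifs <;> omega
  · intro i j hp hp'
    rw [cellChar1] at hp hp'
    simp only [Prod.mk.injEq] at hp hp'
    obtain ⟨hi, hj⟩ : i = 0 ∧ j = 1 := by omega
    subst hi; subst hj
    norm_num [tab1, Prod.ext_iff]
    exact h2
  · intro i j hp hp'
    rw [cellChar1] at hp hp'
    simp only [Prod.mk.injEq] at hp hp'
    obtain ⟨hi, hj⟩ : i = 0 ∧ j = 1 := by omega
    subst hi; subst hj
    norm_num [tab1, Prod.ext_iff]
    exact h3

def e1 : {M : ℕ × ℕ → ℕ // IsSSYT lam312 mu11 M} ≃ {q : ℕ × ℕ × ℕ × ℕ // Q1 q} where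
  toFun M := ⟨(M.1 (0,1), M.1 (0,2), M.1 (1,1), M.1 (2,0)), by
    obtain ⟨M, h1, h2, h3, h4⟩ := M
    refine ⟨h1 _ ((cellChar1 _).2 (by simp)), h3 0 1 ((cellChar1 _).2 (by simp)) ((cellChar1 _).2 (by simp)),
      h4 0 1 ((cellChar1 _).2 (by simp)) ((cellChar1 _).2 (by simp)), h1 _ ((cellChar1 _).2 (by simp))⟩⟩
  invFun q := ⟨tab1 q.1, isSSYT_tab1 q.2⟩
  left_inv M := by
    obtain ⟨M, h1, h2, h3, h4⟩ := M
    ext p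
    by_cases hp : SkewCell lam312 mu11 p
    · rcases (cellChar1 p).1 hp with h|h|h|h <;> subst h <;> norm_num [tab1, Prod.ext_iff]
    · have h0 := h2 p hp
      rw [cellChar1] at hp
      push_neg at hp
      obtain ⟨pi, pj⟩ := p
      simp only [ne_eq, Prod.mk.injEq, not_and] at hp
      simp only [tab1, Prod.mk.injEq]
      split_ifs <;> omega
  right_inv q := by
    obtain ⟨⟨a, c, b, d⟩, hq⟩ := q
    norm_num [tab1, Prod.ext_iff]

/-- tuple order: (x1, x2, x3, x4, u, v, w) -/
def Q2 (q : ℕ × ℕ × ℕ × ℕ × ℕ × ℕ × ℕ) : Prop :=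
  0 < q.1 ∧ q.1 < q.2.1 ∧ q.2.1 < q.2.2.1 ∧ q.2.2.1 < q.2.2.2.1 ∧
  0 < q.2.2.2.2.1 ∧ q.2.2.2.2.1 ≤ q.2.2.2.2.2.1 ∧ q.2.2.2.2.1 < q.2.2.2.2.2.2

def tab2 (q : ℕ × ℕ × ℕ × ℕ × ℕ × ℕ × ℕ) : ℕ × ℕ → ℕ := fun p =>
  if p = (0,2) then q.1 else if p = (1,2) then q.2.1 else
  if p = (2,2) then q.2.2.1 else if p = (3,2) then q.2.2.2.1 else
  if p = (4,0) then q.2.2.2.2.1 else if p = (4,1) then q.2.2.2.2.2.1 else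
  if p = (5,0) then q.2.2.2.2.2.2 else 0

lemma isSSYT_tab2 {q : ℕ × ℕ × ℕ × ℕ × ℕ × ℕ × ℕ} (hq : Q2 q) : IsSSYT lamD12 muD12 (tab2 q) := by
  obtain ⟨x1, x2, x3, x4, u, v, w⟩ := q
  dsimp only [Q2] at hq
  obtain ⟨h1, h2, h3, h4, h5, h6, h7⟩ := hq
  refine ⟨?_, ?_, ?_, ?_⟩
  · intro p hp
    rcases (cellChar2 p).1 hp with h|h|h|h|h|h|h <;> subst h <;>
      norm_num [tab2, Prod.ext_iff] <;> omega
  · intro p hp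
    rw [cellChar2] at hp
    push_neg at hp
    obtain ⟨pi, pj⟩ := p
    simp only [ne_eq, Prod.mk.injEq, not_and] at hp
    simp only [tab2, Prod.mk.injEq]
    split_ifs <;> omega
  · intro i j hp hp'
    rw [cellChar2] at hp hp'
    simp only [Prod.mk.injEq] at hp hp'
    obtain ⟨hi, hj⟩ : i = 4 ∧ j = 0 := by omega
    subst hi; subst hj
    norm_num [tab2, Prod.ext_iff]
    omega
  · intro i j hp hp'
    rw [cellChar2] at hp hp'
    simp only [Prod.mk.injEq] at hp hp'
    have hc : (i = 0 ∧ j = 2) ∨ (i = 1 ∧ j = 2) ∨ (i = 2 ∧ j = 2) ∨ (i = 4 ∧ j = 0) := by omega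
    rcases hc with ⟨hi, hj⟩|⟨hi, hj⟩|⟨hi, hj⟩|⟨hi, hj⟩ <;> subst hi <;> subst hj <;>
      norm_num [tab2, Prod.ext_iff] <;> omega

def e2 : {M : ℕ × ℕ → ℕ // IsSSYT lamD12 muD12 M} ≃ {q : ℕ × ℕ × ℕ × ℕ × ℕ × ℕ × ℕ // Q2 q} where
  toFun M := ⟨(M.1 (0,2), M.1 (1,2), M.1 (2,2), M.1 (3,2), M.1 (4,0), M.1 (4,1), M.1 (5,0)), by
    obtain ⟨M, h1, h2, h3, h4⟩ := M
    exact ⟨h1 _ ((cellChar2 _).2 (by simp)),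
      h4 0 2 ((cellChar2 _).2 (by simp)) ((cellChar2 _).2 (by simp)),
      h4 1 2 ((cellChar2 _).2 (by simp)) ((cellChar2 _).2 (by simp)),
      h4 2 2 ((cellChar2 _).2 (by simp)) ((cellChar2 _).2 (by simp)),
      h1 _ ((cellChar2 _).2 (by simp)),
      h3 4 0 ((cellChar2 _).2 (by simp)) ((cellChar2 _).2 (by simp)),
      h4 4 0 ((cellChar2 _).2 (by simp)) ((cellChar2 _).2 (by simp))⟩⟩
  invFun q := ⟨tab2 q.1, isSSYT_tab2 q.2⟩
  left_inv M := by
    obtain ⟨M, h1, h2, h3, h4⟩ := M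
    ext p
    by_cases hp : SkewCell lamD12 muD12 p
    · rcases (cellChar2 p).1 hp with h|h|h|h|h|h|h <;> subst h <;> norm_num [tab2, Prod.ext_iff]
    · have h0 := h2 p hp
      rw [cellChar2] at hp
      push_neg at hp
      obtain ⟨pi, pj⟩ := p
      simp only [ne_eq, Prod.mk.injEq, not_and] at hp
      simp only [tab2, Prod.mk.injEq]
      split_ifs <;> omega
  right_inv q := by
    obtain ⟨⟨x1, x2, x3, x4, u, v, w⟩, hq⟩ := q
    norm_num [tab2, Prod.ext_iff]


noncomputable def CC (m n : ℕ) : ℝ≥0 :=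
  ((m.factorial * n.factorial : ℕ) : ℝ≥0) / (((m + n).factorial : ℕ) : ℝ≥0)

lemma CC_symm (m n : ℕ) : CC m n = CC n m := by
  unfold CC; rw [mul_comm, Nat.add_comm]

lemma CC_zero (m : ℕ) : CC m 0 = 1 := by
  unfold CC
  rw [Nat.factorial_zero, mul_one, Nat.add_zero, div_self]
  positivity

lemma CC_step (m b : ℕ) (hm : 1 ≤ m) :
    ((b + 1 : ℕ) : ℝ≥0)⁻¹ * CC m (b + 1) + ((m : ℕ) : ℝ≥0)⁻¹ * CC m (b + 1)
      = ((m : ℕ) : ℝ≥0)⁻¹ * CC m b := by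
  unfold CC
  have h2 : (((m + b).factorial : ℕ) : ℝ≥0) ≠ 0 := by positivity
  have hm0 : ((m : ℕ) : ℝ≥0) ≠ 0 := by positivity
  have hb0 : ((b + 1 : ℕ) : ℝ≥0) ≠ 0 := by positivity
  have e1 : ((m + (b + 1)).factorial : ℕ) = (m + b + 1) * (m + b).factorial := by
    rw [show m + (b + 1) = (m + b) + 1 by ring, Nat.factorial_succ]
  have e2 : ((b + 1).factorial : ℕ) = (b + 1) * b.factorial := by rw [Nat.factorial_succ]
  rw [e1, e2]
  field_simp
  push_cast
  ring

lemma CC_le (m k : ℕ) (hm : 1 ≤ m) :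
    CC m k ≤ (m.factorial : ℝ≥0) * ((k + 1 : ℕ) : ℝ≥0)⁻¹ := by
  unfold CC
  rw [← div_eq_mul_inv, div_le_div_iff₀ (by positivity) (by positivity)]
  have hnat : m.factorial * k.factorial * (k + 1) ≤ m.factorial * (m + k).factorial := by
    calc m.factorial * k.factorial * (k + 1) = m.factorial * (k + 1).factorial := by
          rw [Nat.factorial_succ]; ring
      _ ≤ m.factorial * (m + k).factorial :=
          Nat.mul_le_mul_left _ (Nat.factorial_le (by omega))
  exact_mod_cast hnat

/-- Key transport lemma (Seki–Yamamoto-style telescoping). -/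
lemma KL (m n0 : ℕ) (hm : 1 ≤ m) :
    (∑' a : ℕ, if n0 < a then (((a : ℝ≥0)⁻¹ * CC m a : ℝ≥0) : ℝ≥0∞) else 0)
      = (((m : ℝ≥0)⁻¹ * CC m n0 : ℝ≥0) : ℝ≥0∞) := by
  set f : ℕ → ℝ≥0∞ := fun a => if n0 < a then (((a : ℝ≥0)⁻¹ * CC m a : ℝ≥0) : ℝ≥0∞) else 0 with hf
  set g : ℕ → ℝ≥0 := fun j => ((n0 + 1 + j : ℕ) : ℝ≥0)⁻¹ * CC m (n0 + 1 + j) with hg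
  set h : ℕ → ℝ≥0 := fun t => ((m : ℕ) : ℝ≥0)⁻¹ * CC m (n0 + t) with hh
  have hinj : Function.Injective (fun j : ℕ => n0 + 1 + j) := by
    intro x y hxy
    dsimp only at hxy
    omega
  have hsupp : ∀ a ∉ Set.range (fun j : ℕ => n0 + 1 + j), f a = 0 := by
    intro a ha
    have : ¬ n0 < a := by
      intro hlt
      exact ha ⟨a - (n0 + 1), by dsimp only; omega⟩
    simp [hf, this]
  have hre : ∑' j : ℕ, f (n0 + 1 + j) = ∑' a : ℕ, f a :=
    hinj.tsum_eq (Function.support_subset_iff'.2 hsupp)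
  have hfg : ∀ j, f (n0 + 1 + j) = (g j : ℝ≥0∞) := by
    intro j
    simp only [hf, hg, if_pos (by omega : n0 < n0 + 1 + j)]
  have key : ∀ N, (∑ j ∈ Finset.range N, g j) + h N = h 0 := by
    intro N
    induction N with
    | zero => simp
    | succ N ih =>
      have step : g N + h (N + 1) = h N := by
        have := CC_step m (n0 + N) hm
        simp only [hg, hh]
        rw [show n0 + 1 + N = n0 + N + 1 by ring, show n0 + (N + 1) = n0 + N + 1 by ring]
        exact this
      rw [Finset.sum_range_succ, add_assoc, step, ih]
  have hR : (((m : ℝ≥0)⁻¹ * CC m n0 : ℝ≥0) : ℝ≥0∞) = ((h 0 : ℝ≥0) : ℝ≥0∞) := by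
    simp [hh]
  rw [hR, ← hre, tsum_congr hfg, ENNReal.tsum_eq_iSup_nat]
  have hps : ∀ N : ℕ, (∑ j ∈ Finset.range N, ((g j : ℝ≥0) : ℝ≥0∞))
      = (((∑ j ∈ Finset.range N, g j : ℝ≥0)) : ℝ≥0∞) := fun N => by push_cast; rfl
  apply le_antisymm
  · refine iSup_le fun N => ?_
    rw [hps]
    refine ENNReal.coe_le_coe.2 ?_
    calc (∑ j ∈ Finset.range N, g j) ≤ (∑ j ∈ Finset.range N, g j) + h N := le_self_add
      _ = h 0 := key N
  · set SUP := ⨆ N : ℕ, ∑ j ∈ Finset.range N, ((g j : ℝ≥0) : ℝ≥0∞) with hSUP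
    have hb : ∀ N : ℕ, ((h 0 : ℝ≥0) : ℝ≥0∞) ≤ SUP + ((h N : ℝ≥0) : ℝ≥0∞) := by
      intro N
      rw [← key N]
      push_cast
      refine add_le_add ?_ le_rfl
      exact le_iSup (fun N : ℕ => ∑ j ∈ Finset.range N, ((g j : ℝ≥0) : ℝ≥0∞)) N
    have hbound : ∀ N : ℕ, ((h N : ℝ≥0) : ℝ≥0∞)
        ≤ ((m.factorial : ℝ≥0∞)) * ((N : ℝ≥0∞))⁻¹ := by
      intro N
      have h1 : h N ≤ (m.factorial : ℝ≥0) * ((n0 + N + 1 : ℕ) : ℝ≥0)⁻¹ := by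
        have h2 := CC_le m (n0 + N) hm
        have h3 : h N ≤ CC m (n0 + N) := by
          calc h N ≤ 1 * CC m (n0 + N) := by
                refine mul_le_mul' ?_ le_rfl
                rw [inv_le_one₀ (by positivity)]
                exact_mod_cast hm
            _ = CC m (n0 + N) := one_mul _
        exact h3.trans h2
      calc ((h N : ℝ≥0) : ℝ≥0∞) ≤ ((m.factorial : ℝ≥0) * ((n0 + N + 1 : ℕ) : ℝ≥0)⁻¹ : ℝ≥0∞) :=
            ENNReal.coe_le_coe.2 h1
        _ = (m.factorial : ℝ≥0∞) * (((n0 + N + 1 : ℕ) : ℝ≥0∞))⁻¹ := by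
            rw [ENNReal.coe_inv (by positivity : ((n0 + N + 1 : ℕ) : ℝ≥0) ≠ 0)]
            simp
        _ ≤ (m.factorial : ℝ≥0∞) * ((N : ℝ≥0∞))⁻¹ := by
            gcongr
            exact_mod_cast (by omega : N ≤ n0 + N + 1)
    have hB : Filter.Tendsto (fun N : ℕ => ((m.factorial : ℝ≥0∞)) * ((N : ℝ≥0∞))⁻¹)
        Filter.atTop (nhds 0) := by
      have := ENNReal.Tendsto.const_mul (a := (m.factorial : ℝ≥0∞))
        ENNReal.tendsto_inv_nat_nhds_zero (Or.inr (ENNReal.natCast_ne_top _))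
      simpa using this
    have hlim0 : Filter.Tendsto (fun N : ℕ => ((h N : ℝ≥0) : ℝ≥0∞)) Filter.atTop (nhds 0) :=
      tendsto_of_tendsto_of_tendsto_of_le_of_le tendsto_const_nhds hB
        (fun N => zero_le) hbound
    have hadd : Filter.Tendsto (fun N : ℕ => SUP + ((h N : ℝ≥0) : ℝ≥0∞))
        Filter.atTop (nhds (SUP + 0)) := Filter.Tendsto.add tendsto_const_nhds hlim0
    rw [add_zero] at hadd
    exact ge_of_tendsto' hadd hb

lemma GKL (P : Prop) [Decidable P] (c : ℝ≥0∞) (m n0 : ℕ) (hm : P → 1 ≤ m) :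
    (∑' a : ℕ, if P ∧ n0 < a then c * (((a : ℝ≥0)⁻¹ * CC m a : ℝ≥0) : ℝ≥0∞) else 0)
      = if P then c * (((m : ℝ≥0)⁻¹ * CC m n0 : ℝ≥0) : ℝ≥0∞) else 0 := by
  by_cases hP : P
  · simp only [hP, true_and, if_true]
    rw [← KL m n0 (hm hP), ← ENNReal.tsum_mul_left]
    exact tsum_congr fun a => by by_cases h : n0 < a <;> simp [h]
  · simp [hP]

noncomputable def ww (k n : ℕ) : ℝ≥0 := ((n : ℝ≥0) ^ k)⁻¹

lemma ww_succ (k n : ℕ) : ww (k + 1) n = ww k n * ((n : ℝ≥0))⁻¹ := by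
  unfold ww; rw [pow_succ, mul_inv]

lemma ww_one (n : ℕ) : ww 1 n = ((n : ℝ≥0))⁻¹ := by unfold ww; rw [pow_one]

theorem core :
    (∑' n1 : ℕ, ∑' n2 : ℕ, ∑' n3 : ℕ, ∑' n4 : ℕ,
        if 0 < n1 ∧ n1 < n2 ∧ n2 < n3 ∧ n3 < n4 then
          ((ww 1 n1 * ww 1 n2 * ww 1 n3 * ww 2 n4 : ℝ≥0) : ℝ≥0∞) else 0)
      = ∑' d : ℕ, if 0 < d then ((ww 5 d : ℝ≥0) : ℝ≥0∞) else 0 := by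
  have s1 : ∀ m : ℕ, (if 0 < m then ((ww 5 m : ℝ≥0) : ℝ≥0∞) else 0)
      = ∑' n1 : ℕ, if 0 < m ∧ 0 < n1 then
          ((ww 4 m * (((n1 : ℝ≥0))⁻¹ * CC m n1) : ℝ≥0) : ℝ≥0∞) else 0 := by
    intro m
    have := GKL (0 < m) ((ww 4 m : ℝ≥0) : ℝ≥0∞) m 0 (fun h => h)
    rw [show (∑' n1 : ℕ, if 0 < m ∧ 0 < n1 then
        ((ww 4 m * (((n1 : ℝ≥0))⁻¹ * CC m n1) : ℝ≥0) : ℝ≥0∞) else 0)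
      = ∑' a : ℕ, if 0 < m ∧ 0 < a then
        ((ww 4 m : ℝ≥0) : ℝ≥0∞) * (((a : ℝ≥0)⁻¹ * CC m a : ℝ≥0) : ℝ≥0∞) else 0 from
      tsum_congr fun a => by rw [← ENNReal.coe_mul], this]
    by_cases hm : 0 < m
    · simp only [hm, if_true]
      rw [← ENNReal.coe_mul]
      congr 1
      rw [CC_zero, mul_one, show (5 : ℕ) = 4 + 1 from rfl, ww_succ]
    · simp [hm]
  have s2 : ∀ m n1 : ℕ, (if 0 < m ∧ 0 < n1 then
        ((ww 4 m * (((n1 : ℝ≥0))⁻¹ * CC m n1) : ℝ≥0) : ℝ≥0∞) else 0)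
      = ∑' n2 : ℕ, if 0 < m ∧ 0 < n1 ∧ n1 < n2 then
          ((ww 3 m * ww 1 n1 * (((n2 : ℝ≥0))⁻¹ * CC m n2) : ℝ≥0) : ℝ≥0∞) else 0 := by
    intro m n1
    have := GKL (0 < m ∧ 0 < n1) ((ww 3 m * ww 1 n1 : ℝ≥0) : ℝ≥0∞) m n1 (fun h => h.1)
    rw [show (∑' n2 : ℕ, if 0 < m ∧ 0 < n1 ∧ n1 < n2 then
        ((ww 3 m * ww 1 n1 * (((n2 : ℝ≥0))⁻¹ * CC m n2) : ℝ≥0) : ℝ≥0∞) else 0)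
      = ∑' a : ℕ, if (0 < m ∧ 0 < n1) ∧ n1 < a then
        ((ww 3 m * ww 1 n1 : ℝ≥0) : ℝ≥0∞) * (((a : ℝ≥0)⁻¹ * CC m a : ℝ≥0) : ℝ≥0∞) else 0 from
      tsum_congr fun a => by
        rw [← ENNReal.coe_mul]
        exact if_congr (by tauto) rfl rfl, this]
    by_cases hm : 0 < m ∧ 0 < n1
    · simp only [hm, if_true]
      rw [← ENNReal.coe_mul]
      congr 1
      rw [ww_one, show (4 : ℕ) = 3 + 1 from rfl, ww_succ]
      ring
    · simp [hm]
  have s3 : ∀ m n1 n2 : ℕ, (if 0 < m ∧ 0 < n1 ∧ n1 < n2 then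
        ((ww 3 m * ww 1 n1 * (((n2 : ℝ≥0))⁻¹ * CC m n2) : ℝ≥0) : ℝ≥0∞) else 0)
      = ∑' n3 : ℕ, if 0 < m ∧ 0 < n1 ∧ n1 < n2 ∧ n2 < n3 then
          ((ww 2 m * ww 1 n1 * ww 1 n2 * (((n3 : ℝ≥0))⁻¹ * CC m n3) : ℝ≥0) : ℝ≥0∞) else 0 := by
    intro m n1 n2
    have := GKL (0 < m ∧ 0 < n1 ∧ n1 < n2) ((ww 2 m * ww 1 n1 * ww 1 n2 : ℝ≥0) : ℝ≥0∞) m n2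
      (fun h => h.1)
    rw [show (∑' n3 : ℕ, if 0 < m ∧ 0 < n1 ∧ n1 < n2 ∧ n2 < n3 then
        ((ww 2 m * ww 1 n1 * ww 1 n2 * (((n3 : ℝ≥0))⁻¹ * CC m n3) : ℝ≥0) : ℝ≥0∞) else 0)
      = ∑' a : ℕ, if (0 < m ∧ 0 < n1 ∧ n1 < n2) ∧ n2 < a then
        ((ww 2 m * ww 1 n1 * ww 1 n2 : ℝ≥0) : ℝ≥0∞) * (((a : ℝ≥0)⁻¹ * CC m a : ℝ≥0) : ℝ≥0∞) else 0 from
      tsum_congr fun a => by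
        rw [← ENNReal.coe_mul]
        exact if_congr (by tauto) rfl rfl, this]
    by_cases hm : 0 < m ∧ 0 < n1 ∧ n1 < n2
    · simp only [hm, if_true]
      rw [← ENNReal.coe_mul]
      congr 1
      rw [ww_one n2, show (3 : ℕ) = 2 + 1 from rfl, ww_succ]
      ring
    · simp [hm]
  have s4 : ∀ m n1 n2 n3 : ℕ, (if 0 < m ∧ 0 < n1 ∧ n1 < n2 ∧ n2 < n3 then
        ((ww 2 m * ww 1 n1 * ww 1 n2 * (((n3 : ℝ≥0))⁻¹ * CC m n3) : ℝ≥0) : ℝ≥0∞) else 0)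
      = ∑' n4 : ℕ, if 0 < m ∧ 0 < n1 ∧ n1 < n2 ∧ n2 < n3 ∧ n3 < n4 then
          ((ww 1 m * ww 1 n1 * ww 1 n2 * ww 1 n3 * (((n4 : ℝ≥0))⁻¹ * CC m n4) : ℝ≥0) : ℝ≥0∞) else 0 := by
    intro m n1 n2 n3
    have := GKL (0 < m ∧ 0 < n1 ∧ n1 < n2 ∧ n2 < n3)
      ((ww 1 m * ww 1 n1 * ww 1 n2 * ww 1 n3 : ℝ≥0) : ℝ≥0∞) m n3 (fun h => h.1)
    rw [show (∑' n4 : ℕ, if 0 < m ∧ 0 < n1 ∧ n1 < n2 ∧ n2 < n3 ∧ n3 < n4 then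
        ((ww 1 m * ww 1 n1 * ww 1 n2 * ww 1 n3 * (((n4 : ℝ≥0))⁻¹ * CC m n4) : ℝ≥0) : ℝ≥0∞) else 0)
      = ∑' a : ℕ, if (0 < m ∧ 0 < n1 ∧ n1 < n2 ∧ n2 < n3) ∧ n3 < a then
        ((ww 1 m * ww 1 n1 * ww 1 n2 * ww 1 n3 : ℝ≥0) : ℝ≥0∞) * (((a : ℝ≥0)⁻¹ * CC m a : ℝ≥0) : ℝ≥0∞) else 0 from
      tsum_congr fun a => by
        rw [← ENNReal.coe_mul]
        exact if_congr (by tauto) rfl rfl, this]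
    by_cases hm : 0 < m ∧ 0 < n1 ∧ n1 < n2 ∧ n2 < n3
    · simp only [hm, if_true]
      rw [← ENNReal.coe_mul]
      congr 1
      rw [ww_one n3, show (2 : ℕ) = 1 + 1 from rfl, ww_succ]
      ring
    · simp [hm]
  have s5 : ∀ n1 n2 n3 n4 : ℕ, (∑' m : ℕ, if 0 < m ∧ 0 < n1 ∧ n1 < n2 ∧ n2 < n3 ∧ n3 < n4 then
        ((ww 1 m * ww 1 n1 * ww 1 n2 * ww 1 n3 * (((n4 : ℝ≥0))⁻¹ * CC m n4) : ℝ≥0) : ℝ≥0∞) else 0)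
      = if 0 < n1 ∧ n1 < n2 ∧ n2 < n3 ∧ n3 < n4 then
          ((ww 1 n1 * ww 1 n2 * ww 1 n3 * ww 2 n4 : ℝ≥0) : ℝ≥0∞) else 0 := by
    intro n1 n2 n3 n4
    have := GKL (0 < n1 ∧ n1 < n2 ∧ n2 < n3 ∧ n3 < n4)
      ((ww 1 n1 * ww 1 n2 * ww 1 n3 * ww 1 n4 : ℝ≥0) : ℝ≥0∞) n4 0 (fun h => by omega)
    rw [show (∑' m : ℕ, if 0 < m ∧ 0 < n1 ∧ n1 < n2 ∧ n2 < n3 ∧ n3 < n4 then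
        ((ww 1 m * ww 1 n1 * ww 1 n2 * ww 1 n3 * (((n4 : ℝ≥0))⁻¹ * CC m n4) : ℝ≥0) : ℝ≥0∞) else 0)
      = ∑' a : ℕ, if (0 < n1 ∧ n1 < n2 ∧ n2 < n3 ∧ n3 < n4) ∧ 0 < a then
        ((ww 1 n1 * ww 1 n2 * ww 1 n3 * ww 1 n4 : ℝ≥0) : ℝ≥0∞) * (((a : ℝ≥0)⁻¹ * CC n4 a : ℝ≥0) : ℝ≥0∞) else 0 from
      tsum_congr fun a => by
        rw [← ENNReal.coe_mul]
        refine if_congr (by tauto) ?_ rfl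
        rw [ww_one a, CC_symm a n4, ww_one n4]
        congr 1
        ring, this]
    by_cases hg : 0 < n1 ∧ n1 < n2 ∧ n2 < n3 ∧ n3 < n4
    · simp only [hg, if_true]
      rw [← ENNReal.coe_mul]
      congr 1
      have h2 : ww 2 n4 = ww 1 n4 * ((n4 : ℝ≥0))⁻¹ := ww_succ 1 n4
      rw [CC_zero, mul_one, h2]
      ring
    · simp [hg]
  calc (∑' n1 : ℕ, ∑' n2 : ℕ, ∑' n3 : ℕ, ∑' n4 : ℕ,
        if 0 < n1 ∧ n1 < n2 ∧ n2 < n3 ∧ n3 < n4 then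
          ((ww 1 n1 * ww 1 n2 * ww 1 n3 * ww 2 n4 : ℝ≥0) : ℝ≥0∞) else 0)
      = ∑' n1 : ℕ, ∑' n2 : ℕ, ∑' n3 : ℕ, ∑' n4 : ℕ, ∑' m : ℕ,
          if 0 < m ∧ 0 < n1 ∧ n1 < n2 ∧ n2 < n3 ∧ n3 < n4 then
            ((ww 1 m * ww 1 n1 * ww 1 n2 * ww 1 n3 * (((n4 : ℝ≥0))⁻¹ * CC m n4) : ℝ≥0) : ℝ≥0∞) else 0 := by
        exact tsum_congr fun n1 => tsum_congr fun n2 => tsum_congr fun n3 => tsum_congr fun n4 =>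
          (s5 n1 n2 n3 n4).symm
    _ = ∑' n1 : ℕ, ∑' n2 : ℕ, ∑' n3 : ℕ, ∑' m : ℕ, ∑' n4 : ℕ,
          if 0 < m ∧ 0 < n1 ∧ n1 < n2 ∧ n2 < n3 ∧ n3 < n4 then
            ((ww 1 m * ww 1 n1 * ww 1 n2 * ww 1 n3 * (((n4 : ℝ≥0))⁻¹ * CC m n4) : ℝ≥0) : ℝ≥0∞) else 0 :=
        tsum_congr fun n1 => tsum_congr fun n2 => tsum_congr fun n3 => ENNReal.tsum_comm
    _ = ∑' n1 : ℕ, ∑' n2 : ℕ, ∑' m : ℕ, ∑' n3 : ℕ, ∑' n4 : ℕ,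
          if 0 < m ∧ 0 < n1 ∧ n1 < n2 ∧ n2 < n3 ∧ n3 < n4 then
            ((ww 1 m * ww 1 n1 * ww 1 n2 * ww 1 n3 * (((n4 : ℝ≥0))⁻¹ * CC m n4) : ℝ≥0) : ℝ≥0∞) else 0 :=
        tsum_congr fun n1 => tsum_congr fun n2 => ENNReal.tsum_comm
    _ = ∑' n1 : ℕ, ∑' m : ℕ, ∑' n2 : ℕ, ∑' n3 : ℕ, ∑' n4 : ℕ,
          if 0 < m ∧ 0 < n1 ∧ n1 < n2 ∧ n2 < n3 ∧ n3 < n4 then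
            ((ww 1 m * ww 1 n1 * ww 1 n2 * ww 1 n3 * (((n4 : ℝ≥0))⁻¹ * CC m n4) : ℝ≥0) : ℝ≥0∞) else 0 :=
        tsum_congr fun n1 => ENNReal.tsum_comm
    _ = ∑' m : ℕ, ∑' n1 : ℕ, ∑' n2 : ℕ, ∑' n3 : ℕ, ∑' n4 : ℕ,
          if 0 < m ∧ 0 < n1 ∧ n1 < n2 ∧ n2 < n3 ∧ n3 < n4 then
            ((ww 1 m * ww 1 n1 * ww 1 n2 * ww 1 n3 * (((n4 : ℝ≥0))⁻¹ * CC m n4) : ℝ≥0) : ℝ≥0∞) else 0 :=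
        ENNReal.tsum_comm
    _ = ∑' m : ℕ, ∑' n1 : ℕ, ∑' n2 : ℕ, ∑' n3 : ℕ,
          if 0 < m ∧ 0 < n1 ∧ n1 < n2 ∧ n2 < n3 then
            ((ww 2 m * ww 1 n1 * ww 1 n2 * (((n3 : ℝ≥0))⁻¹ * CC m n3) : ℝ≥0) : ℝ≥0∞) else 0 :=
        tsum_congr fun m => tsum_congr fun n1 => tsum_congr fun n2 => tsum_congr fun n3 =>
          (s4 m n1 n2 n3).symm
    _ = ∑' m : ℕ, ∑' n1 : ℕ, ∑' n2 : ℕ,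
          if 0 < m ∧ 0 < n1 ∧ n1 < n2 then
            ((ww 3 m * ww 1 n1 * (((n2 : ℝ≥0))⁻¹ * CC m n2) : ℝ≥0) : ℝ≥0∞) else 0 :=
        tsum_congr fun m => tsum_congr fun n1 => tsum_congr fun n2 => (s3 m n1 n2).symm
    _ = ∑' m : ℕ, ∑' n1 : ℕ,
          if 0 < m ∧ 0 < n1 then
            ((ww 4 m * (((n1 : ℝ≥0))⁻¹ * CC m n1) : ℝ≥0) : ℝ≥0∞) else 0 :=
        tsum_congr fun m => tsum_congr fun n1 => (s2 m n1).symm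
    _ = ∑' m : ℕ, if 0 < m then ((ww 5 m : ℝ≥0) : ℝ≥0∞) else 0 :=
        tsum_congr fun m => (s1 m).symm

lemma cpow_neg_nat (n k : ℕ) (hn : 0 < n) :
    (n : ℂ) ^ (-(k : ℂ)) = Complex.ofReal (((ww k n : ℝ≥0) : ℝ)) := by
  have h0 : (0 : ℝ) ≤ (n : ℝ) := n.cast_nonneg
  rw [show ((n : ℂ)) = (((n : ℝ) : ℂ)) from by norm_cast,
      show (-(k : ℂ)) = (((-(k : ℝ) : ℝ)) : ℂ) from by push_cast; ring,
      ← Complex.ofReal_cpow h0]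
  congr 1
  rw [Real.rpow_neg h0, Real.rpow_natCast]
  unfold ww
  push_cast
  rfl

lemma cpow1 (n : ℕ) (hn : 0 < n) :
    (n : ℂ) ^ (-(1 : ℂ)) = Complex.ofReal (((ww 1 n : ℝ≥0) : ℝ)) := by
  simpa using cpow_neg_nat n 1 hn

lemma cpow2 (n : ℕ) (hn : 0 < n) :
    (n : ℂ) ^ (-(2 : ℂ)) = Complex.ofReal (((ww 2 n : ℝ≥0) : ℝ)) := by
  simpa using cpow_neg_nat n 2 hn

lemma cpow3 (n : ℕ) (hn : 0 < n) :
    (n : ℂ) ^ (-(3 : ℂ)) = Complex.ofReal (((ww 3 n : ℝ≥0) : ℝ)) := by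
  simpa using cpow_neg_nat n 3 hn

lemma cpow5 (n : ℕ) (hn : 0 < n) :
    (n : ℂ) ^ (-(5 : ℂ)) = Complex.ofReal (((ww 5 n : ℝ≥0) : ℝ)) := by
  simpa using cpow_neg_nat n 5 hn

lemma prodcells1 : skewCells lam312 mu11 3 = ({(0,1), (0,2), (1,1), (2,0)} : Finset (ℕ × ℕ)) := by
  decide

lemma prodcells2 : skewCells lamD12 muD12 6
    = ({(0,2), (1,2), (2,2), (3,2), (4,0), (4,1), (5,0)} : Finset (ℕ × ℕ)) := by
  decide

noncomputable def g1 (q : ℕ × ℕ × ℕ × ℕ) : ℝ≥0 :=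
  ww 1 q.1 * (ww 3 q.2.1 * (ww 2 q.2.2.1 * ww 5 q.2.2.2))

noncomputable def g2 (q : ℕ × ℕ × ℕ × ℕ × ℕ × ℕ × ℕ) : ℝ≥0 :=
  ww 1 q.1 * (ww 1 q.2.1 * (ww 1 q.2.2.1 * (ww 2 q.2.2.2.1 *
    (ww 1 q.2.2.2.2.1 * (ww 3 q.2.2.2.2.2.1 * ww 2 q.2.2.2.2.2.2)))))

lemma zeta1 : schurZeta lam312 mu11 3 kTab12
    = Complex.ofReal ((∑' q : ℕ × ℕ × ℕ × ℕ,
        if Q1 q then ((g1 q : ℝ≥0) : ℝ≥0∞) else 0).toReal) := by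
  unfold schurZeta
  rw [← Equiv.tsum_eq e1.symm]
  have hterm : ∀ q : {q : ℕ × ℕ × ℕ × ℕ // Q1 q},
      (∏ p ∈ skewCells lam312 mu11 3, ((((e1.symm q).1 p : ℕ) : ℂ) ^ (-(kTab12 p))))
        = Complex.ofReal (((g1 q.1 : ℝ≥0) : ℝ)) := by
    rintro ⟨⟨a, c, b, d⟩, hq⟩
    have hq' : 0 < a ∧ a ≤ c ∧ a < b ∧ 0 < d := hq
    obtain ⟨h1, h2, h3, h4⟩ := hq'
    rw [prodcells1]
    rw [Finset.prod_insert (by decide), Finset.prod_insert (by decide),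
        Finset.prod_insert (by decide), Finset.prod_singleton]
    have ha : (e1.symm ⟨(a, c, b, d), hq⟩).1 = tab1 (a, c, b, d) := rfl
    rw [ha]
    have e01 : tab1 (a, c, b, d) (0, 1) = a := by norm_num [tab1, Prod.ext_iff]
    have e02 : tab1 (a, c, b, d) (0, 2) = c := by norm_num [tab1, Prod.ext_iff]
    have e11 : tab1 (a, c, b, d) (1, 1) = b := by norm_num [tab1, Prod.ext_iff]
    have e20 : tab1 (a, c, b, d) (2, 0) = d := by norm_num [tab1, Prod.ext_iff]
    rw [e01, e02, e11, e20]
    have k01 : kTab12 (0, 1) = 1 := by norm_num [kTab12, Prod.ext_iff]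
    have k02 : kTab12 (0, 2) = 3 := by norm_num [kTab12, Prod.ext_iff]
    have k11 : kTab12 (1, 1) = 2 := by norm_num [kTab12, Prod.ext_iff]
    have k20 : kTab12 (2, 0) = 5 := by norm_num [kTab12, Prod.ext_iff]
    rw [k01, k02, k11, k20]
    rw [cpow1 a h1, cpow3 c (by omega), cpow2 b (by omega), cpow5 d h4]
    rw [← Complex.ofReal_mul, ← Complex.ofReal_mul, ← Complex.ofReal_mul]
    norm_cast
  rw [tsum_congr hterm, ← Complex.ofReal_tsum]
  congr 1
  calc (∑' q : {q : ℕ × ℕ × ℕ × ℕ // Q1 q}, ((g1 q.1 : ℝ≥0) : ℝ))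
      = ∑' q : {q : ℕ × ℕ × ℕ × ℕ // Q1 q}, (((g1 q.1 : ℝ≥0) : ℝ≥0∞)).toReal :=
        tsum_congr fun q => (ENNReal.coe_toReal _).symm
    _ = (∑' q : {q : ℕ × ℕ × ℕ × ℕ // Q1 q}, ((g1 q.1 : ℝ≥0) : ℝ≥0∞)).toReal :=
        (ENNReal.tsum_toReal_eq fun _ => ENNReal.coe_ne_top).symm
    _ = (∑' q : ℕ × ℕ × ℕ × ℕ, if Q1 q then ((g1 q : ℝ≥0) : ℝ≥0∞) else 0).toReal := by
        congr 1
        rw [show (∑' q : {q : ℕ × ℕ × ℕ × ℕ // Q1 q}, ((g1 q.1 : ℝ≥0) : ℝ≥0∞))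
            = ∑' x : ↥{q : ℕ × ℕ × ℕ × ℕ | Q1 q}, ((g1 x.1 : ℝ≥0) : ℝ≥0∞) from rfl,
          tsum_subtype {q : ℕ × ℕ × ℕ × ℕ | Q1 q} (fun q => ((g1 q : ℝ≥0) : ℝ≥0∞))]
        exact tsum_congr fun q => by
          by_cases h : Q1 q <;> simp [Set.indicator_apply, Set.mem_setOf_eq, h]

lemma zeta2 : schurZeta lamD12 muD12 6 kTabD12
    = Complex.ofReal ((∑' q : ℕ × ℕ × ℕ × ℕ × ℕ × ℕ × ℕ,
        if Q2 q then ((g2 q : ℝ≥0) : ℝ≥0∞) else 0).toReal) := by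
  unfold schurZeta
  rw [← Equiv.tsum_eq e2.symm]
  have hterm : ∀ q : {q : ℕ × ℕ × ℕ × ℕ × ℕ × ℕ × ℕ // Q2 q},
      (∏ p ∈ skewCells lamD12 muD12 6, ((((e2.symm q).1 p : ℕ) : ℂ) ^ (-(kTabD12 p))))
        = Complex.ofReal (((g2 q.1 : ℝ≥0) : ℝ)) := by
    rintro ⟨⟨x1, x2, x3, x4, u, v, w⟩, hq⟩
    have hq' : 0 < x1 ∧ x1 < x2 ∧ x2 < x3 ∧ x3 < x4 ∧ 0 < u ∧ u ≤ v ∧ u < w := hq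
    obtain ⟨h1, h2, h3, h4, h5, h6, h7⟩ := hq'
    rw [prodcells2]
    rw [Finset.prod_insert (by decide), Finset.prod_insert (by decide),
        Finset.prod_insert (by decide), Finset.prod_insert (by decide),
        Finset.prod_insert (by decide), Finset.prod_insert (by decide),
        Finset.prod_singleton]
    have ha : (e2.symm ⟨(x1, x2, x3, x4, u, v, w), hq⟩).1 = tab2 (x1, x2, x3, x4, u, v, w) := rfl
    rw [ha]
    have e02 : tab2 (x1, x2, x3, x4, u, v, w) (0, 2) = x1 := by norm_num [tab2, Prod.ext_iff]
    have e12 : tab2 (x1, x2, x3, x4, u, v, w) (1, 2) = x2 := by norm_num [tab2, Prod.ext_iff]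
    have e22 : tab2 (x1, x2, x3, x4, u, v, w) (2, 2) = x3 := by norm_num [tab2, Prod.ext_iff]
    have e32 : tab2 (x1, x2, x3, x4, u, v, w) (3, 2) = x4 := by norm_num [tab2, Prod.ext_iff]
    have e40 : tab2 (x1, x2, x3, x4, u, v, w) (4, 0) = u := by norm_num [tab2, Prod.ext_iff]
    have e41 : tab2 (x1, x2, x3, x4, u, v, w) (4, 1) = v := by norm_num [tab2, Prod.ext_iff]
    have e50 : tab2 (x1, x2, x3, x4, u, v, w) (5, 0) = w := by norm_num [tab2, Prod.ext_iff]
    rw [e02, e12, e22, e32, e40, e41, e50]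
    have k02 : kTabD12 (0, 2) = 1 := by norm_num [kTabD12, Prod.ext_iff]
    have k12 : kTabD12 (1, 2) = 1 := by norm_num [kTabD12, Prod.ext_iff]
    have k22 : kTabD12 (2, 2) = 1 := by norm_num [kTabD12, Prod.ext_iff]
    have k32 : kTabD12 (3, 2) = 2 := by norm_num [kTabD12, Prod.ext_iff]
    have k40 : kTabD12 (4, 0) = 1 := by norm_num [kTabD12, Prod.ext_iff]
    have k41 : kTabD12 (4, 1) = 3 := by norm_num [kTabD12, Prod.ext_iff]
    have k50 : kTabD12 (5, 0) = 2 := by norm_num [kTabD12, Prod.ext_iff]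
    rw [k02, k12, k22, k32, k40, k41, k50]
    rw [cpow1 x1 h1, cpow1 x2 (by omega), cpow1 x3 (by omega), cpow2 x4 (by omega),
        cpow1 u h5, cpow3 v (by omega), cpow2 w (by omega)]
    rw [← Complex.ofReal_mul, ← Complex.ofReal_mul, ← Complex.ofReal_mul,
        ← Complex.ofReal_mul, ← Complex.ofReal_mul, ← Complex.ofReal_mul]
    norm_cast
  rw [tsum_congr hterm, ← Complex.ofReal_tsum]
  congr 1
  calc (∑' q : {q : ℕ × ℕ × ℕ × ℕ × ℕ × ℕ × ℕ // Q2 q}, ((g2 q.1 : ℝ≥0) : ℝ))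
      = ∑' q : {q : ℕ × ℕ × ℕ × ℕ × ℕ × ℕ × ℕ // Q2 q}, (((g2 q.1 : ℝ≥0) : ℝ≥0∞)).toReal :=
        tsum_congr fun q => (ENNReal.coe_toReal _).symm
    _ = (∑' q : {q : ℕ × ℕ × ℕ × ℕ × ℕ × ℕ × ℕ // Q2 q}, ((g2 q.1 : ℝ≥0) : ℝ≥0∞)).toReal :=
        (ENNReal.tsum_toReal_eq fun _ => ENNReal.coe_ne_top).symm
    _ = (∑' q : ℕ × ℕ × ℕ × ℕ × ℕ × ℕ × ℕ, if Q2 q then ((g2 q : ℝ≥0) : ℝ≥0∞) else 0).toReal := by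
        congr 1
        rw [show (∑' q : {q : ℕ × ℕ × ℕ × ℕ × ℕ × ℕ × ℕ // Q2 q}, ((g2 q.1 : ℝ≥0) : ℝ≥0∞))
            = ∑' x : ↥{q : ℕ × ℕ × ℕ × ℕ × ℕ × ℕ × ℕ | Q2 q}, ((g2 x.1 : ℝ≥0) : ℝ≥0∞) from rfl,
          tsum_subtype {q : ℕ × ℕ × ℕ × ℕ × ℕ × ℕ × ℕ | Q2 q}
            (fun q => ((g2 q : ℝ≥0) : ℝ≥0∞))]
        exact tsum_congr fun q => by
          by_cases h : Q2 q <;> simp [Set.indicator_apply, Set.mem_setOf_eq, h]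

noncomputable def Z5 : ℝ≥0∞ := ∑' d : ℕ, if 0 < d then ((ww 5 d : ℝ≥0) : ℝ≥0∞) else 0

noncomputable def X3 : ℝ≥0∞ := ∑' a : ℕ, ∑' c : ℕ, ∑' b : ℕ,
  if 0 < a ∧ a ≤ c ∧ a < b then ((ww 1 a * (ww 3 c * ww 2 b) : ℝ≥0) : ℝ≥0∞) else 0

lemma Eleft : (∑' q : ℕ × ℕ × ℕ × ℕ, if Q1 q then ((g1 q : ℝ≥0) : ℝ≥0∞) else 0)
    = X3 * Z5 := by
  have stepD : ∀ a c b : ℕ,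
      (∑' d : ℕ, if Q1 (a, c, b, d) then ((g1 (a, c, b, d) : ℝ≥0) : ℝ≥0∞) else 0)
        = (if 0 < a ∧ a ≤ c ∧ a < b then ((ww 1 a * (ww 3 c * ww 2 b) : ℝ≥0) : ℝ≥0∞) else 0)
            * Z5 := by
    intro a c b
    unfold Z5
    rw [← ENNReal.tsum_mul_left]
    refine tsum_congr fun d => ?_
    by_cases hP : 0 < a ∧ a ≤ c ∧ a < b <;> by_cases hd : 0 < d
    · rw [if_pos (show Q1 (a, c, b, d) from ⟨hP.1, hP.2.1, hP.2.2, hd⟩), if_pos hP, if_pos hd,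
        ← ENNReal.coe_mul]
      congr 1
      unfold g1
      ring
    · rw [if_neg (show ¬ Q1 (a, c, b, d) from fun h => hd h.2.2.2), if_neg hd, mul_zero]
    · rw [if_neg (show ¬ Q1 (a, c, b, d) from fun h => hP ⟨h.1, h.2.1, h.2.2.1⟩), if_neg hP,
        zero_mul]
    · rw [if_neg (show ¬ Q1 (a, c, b, d) from fun h => hd h.2.2.2), if_neg hd, mul_zero]
  calc (∑' q : ℕ × ℕ × ℕ × ℕ, if Q1 q then ((g1 q : ℝ≥0) : ℝ≥0∞) else 0)
      = ∑' a : ℕ, ∑' r : ℕ × ℕ × ℕ,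
          (if Q1 (a, r) then ((g1 (a, r) : ℝ≥0) : ℝ≥0∞) else 0) := ENNReal.tsum_prod'
    _ = ∑' a : ℕ, ∑' c : ℕ, ∑' r : ℕ × ℕ,
          (if Q1 (a, c, r) then ((g1 (a, c, r) : ℝ≥0) : ℝ≥0∞) else 0) :=
        tsum_congr fun a => ENNReal.tsum_prod'
    _ = ∑' a : ℕ, ∑' c : ℕ, ∑' b : ℕ, ∑' d : ℕ,
          (if Q1 (a, c, b, d) then ((g1 (a, c, b, d) : ℝ≥0) : ℝ≥0∞) else 0) :=
        tsum_congr fun a => tsum_congr fun c => ENNReal.tsum_prod'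
    _ = ∑' a : ℕ, ∑' c : ℕ, ∑' b : ℕ,
          (if 0 < a ∧ a ≤ c ∧ a < b then ((ww 1 a * (ww 3 c * ww 2 b) : ℝ≥0) : ℝ≥0∞) else 0)
            * Z5 :=
        tsum_congr fun a => tsum_congr fun c => tsum_congr fun b => stepD a c b
    _ = X3 * Z5 := by
        unfold X3
        rw [← ENNReal.tsum_mul_right]
        refine tsum_congr fun a => ?_
        rw [← ENNReal.tsum_mul_right]
        exact tsum_congr fun c => ENNReal.tsum_mul_right

lemma Eright : (∑' q : ℕ × ℕ × ℕ × ℕ × ℕ × ℕ × ℕ, if Q2 q then ((g2 q : ℝ≥0) : ℝ≥0∞) else 0)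
    = Z5 * X3 := by
  have stepUVW : ∀ x1 x2 x3 x4 : ℕ,
      (∑' u : ℕ, ∑' v : ℕ, ∑' w : ℕ,
        if Q2 (x1, x2, x3, x4, u, v, w) then ((g2 (x1, x2, x3, x4, u, v, w) : ℝ≥0) : ℝ≥0∞) else 0)
      = (if 0 < x1 ∧ x1 < x2 ∧ x2 < x3 ∧ x3 < x4 then
          ((ww 1 x1 * ww 1 x2 * ww 1 x3 * ww 2 x4 : ℝ≥0) : ℝ≥0∞) else 0) * X3 := by
    intro x1 x2 x3 x4
    by_cases hch : 0 < x1 ∧ x1 < x2 ∧ x2 < x3 ∧ x3 < x4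
    · have hterm : ∀ u v w : ℕ,
          (if Q2 (x1, x2, x3, x4, u, v, w) then ((g2 (x1, x2, x3, x4, u, v, w) : ℝ≥0) : ℝ≥0∞) else 0)
          = ((ww 1 x1 * ww 1 x2 * ww 1 x3 * ww 2 x4 : ℝ≥0) : ℝ≥0∞) *
              (if 0 < u ∧ u ≤ v ∧ u < w then ((ww 1 u * (ww 3 v * ww 2 w) : ℝ≥0) : ℝ≥0∞) else 0) := by
        intro u v w
        by_cases h : 0 < u ∧ u ≤ v ∧ u < w
        · rw [if_pos (show Q2 (x1, x2, x3, x4, u, v, w) from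
              ⟨hch.1, hch.2.1, hch.2.2.1, hch.2.2.2, h.1, h.2.1, h.2.2⟩), if_pos h,
            ← ENNReal.coe_mul]
          congr 1
          unfold g2
          ring
        · rw [if_neg (show ¬ Q2 (x1, x2, x3, x4, u, v, w) from
              fun hQ => h ⟨hQ.2.2.2.2.1, hQ.2.2.2.2.2.1, hQ.2.2.2.2.2.2⟩), if_neg h, mul_zero]
      rw [if_pos hch]
      unfold X3
      rw [← ENNReal.tsum_mul_left]
      refine tsum_congr fun u => ?_
      rw [← ENNReal.tsum_mul_left]
      refine tsum_congr fun v => ?_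
      rw [← ENNReal.tsum_mul_left]
      exact tsum_congr fun w => hterm u v w
    · rw [if_neg hch, zero_mul]
      have : ∀ u v w : ℕ,
          (if Q2 (x1, x2, x3, x4, u, v, w) then ((g2 (x1, x2, x3, x4, u, v, w) : ℝ≥0) : ℝ≥0∞) else 0)
            = 0 := fun u v w =>
        if_neg (fun hQ => hch ⟨hQ.1, hQ.2.1, hQ.2.2.1, hQ.2.2.2.1⟩)
      simp only [this, tsum_zero]
  calc (∑' q : ℕ × ℕ × ℕ × ℕ × ℕ × ℕ × ℕ, if Q2 q then ((g2 q : ℝ≥0) : ℝ≥0∞) else 0)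
      = ∑' x1 : ℕ, ∑' r : ℕ × ℕ × ℕ × ℕ × ℕ × ℕ,
          (if Q2 (x1, r) then ((g2 (x1, r) : ℝ≥0) : ℝ≥0∞) else 0) := ENNReal.tsum_prod'
    _ = ∑' x1 : ℕ, ∑' x2 : ℕ, ∑' r : ℕ × ℕ × ℕ × ℕ × ℕ,
          (if Q2 (x1, x2, r) then ((g2 (x1, x2, r) : ℝ≥0) : ℝ≥0∞) else 0) :=
        tsum_congr fun x1 => ENNReal.tsum_prod'
    _ = ∑' x1 : ℕ, ∑' x2 : ℕ, ∑' x3 : ℕ, ∑' r : ℕ × ℕ × ℕ × ℕ,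
          (if Q2 (x1, x2, x3, r) then ((g2 (x1, x2, x3, r) : ℝ≥0) : ℝ≥0∞) else 0) :=
        tsum_congr fun x1 => tsum_congr fun x2 => ENNReal.tsum_prod'
    _ = ∑' x1 : ℕ, ∑' x2 : ℕ, ∑' x3 : ℕ, ∑' x4 : ℕ, ∑' r : ℕ × ℕ × ℕ,
          (if Q2 (x1, x2, x3, x4, r) then ((g2 (x1, x2, x3, x4, r) : ℝ≥0) : ℝ≥0∞) else 0) :=
        tsum_congr fun x1 => tsum_congr fun x2 => tsum_congr fun x3 => ENNReal.tsum_prod'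
    _ = ∑' x1 : ℕ, ∑' x2 : ℕ, ∑' x3 : ℕ, ∑' x4 : ℕ, ∑' u : ℕ, ∑' r : ℕ × ℕ,
          (if Q2 (x1, x2, x3, x4, u, r) then ((g2 (x1, x2, x3, x4, u, r) : ℝ≥0) : ℝ≥0∞) else 0) :=
        tsum_congr fun x1 => tsum_congr fun x2 => tsum_congr fun x3 => tsum_congr fun x4 =>
          ENNReal.tsum_prod'
    _ = ∑' x1 : ℕ, ∑' x2 : ℕ, ∑' x3 : ℕ, ∑' x4 : ℕ, ∑' u : ℕ, ∑' v : ℕ, ∑' w : ℕ,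
          (if Q2 (x1, x2, x3, x4, u, v, w) then
            ((g2 (x1, x2, x3, x4, u, v, w) : ℝ≥0) : ℝ≥0∞) else 0) :=
        tsum_congr fun x1 => tsum_congr fun x2 => tsum_congr fun x3 => tsum_congr fun x4 =>
          tsum_congr fun u => ENNReal.tsum_prod'
    _ = ∑' x1 : ℕ, ∑' x2 : ℕ, ∑' x3 : ℕ, ∑' x4 : ℕ,
          (if 0 < x1 ∧ x1 < x2 ∧ x2 < x3 ∧ x3 < x4 then
            ((ww 1 x1 * ww 1 x2 * ww 1 x3 * ww 2 x4 : ℝ≥0) : ℝ≥0∞) else 0) * X3 :=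
        tsum_congr fun x1 => tsum_congr fun x2 => tsum_congr fun x3 => tsum_congr fun x4 =>
          stepUVW x1 x2 x3 x4
    _ = (∑' x1 : ℕ, ∑' x2 : ℕ, ∑' x3 : ℕ, ∑' x4 : ℕ,
          if 0 < x1 ∧ x1 < x2 ∧ x2 < x3 ∧ x3 < x4 then
            ((ww 1 x1 * ww 1 x2 * ww 1 x3 * ww 2 x4 : ℝ≥0) : ℝ≥0∞) else 0) * X3 := by
        rw [← ENNReal.tsum_mul_right]
        refine tsum_congr fun x1 => ?_
        rw [← ENNReal.tsum_mul_right]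
        refine tsum_congr fun x2 => ?_
        rw [← ENNReal.tsum_mul_right]
        exact tsum_congr fun x3 => ENNReal.tsum_mul_right
    _ = Z5 * X3 := by rw [core]; rfl


/-- With `δ = (3,2,1)/(1,1)`, `k` as above, `δ† = (3,3,3,3,2,1)/(2,2,2,2)`
and `k†` as above, one has `ζ_δ(k) = ζ_{δ†}(k†)`. -/
theorem duality_example_321_11 :
    schurZeta lam312 mu11 3 kTab12 = schurZeta lamD12 muD12 6 kTabD12 := by
  rw [zeta1, zeta2, Eleft, Eright, mul_comm]
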